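/- Let X be a pointed, oriented, closed, connected manifold, Ξ a set of DG Morse data on X with Barraud–Cornea twisting cocycle m, and let φ : (𝓐, ν^𝓐) → (𝓑, ν^𝓑) be a morphism of A∞-modules over C_*(ΩX). Then the map φ̃ = Σ_{n≥0} (φ_{n+1} ⊗ 1) ∘ m̃^n : C_*(X, Ξ, 𝓐) → C_*(X, Ξ, 𝓑) is a morphism of chain complexes, i.e. ∂ ∘ φ̃ = φ̃ ∘ ∂ for the twisted differentials ∂ = Σ_{n≥0} (ν_{n+1} ⊗ 1) ∘ m̃^n on each side. -/

import Mathlib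

/-!
## Abstract framework for Morse theory with DG and `A∞` coefficients

Following Barraud–Cornea and Barraud–Damian–Humilière–Oancea (BDHO):

* The cubical chain algebra `C_*(ΩX)` of the Moore loop space of a pointed, oriented,
  closed, connected manifold `X` (with the Pontryagin product) is abstracted as a
  connective, unital differential graded algebra `DGA` over `ℤ`.
* The set of critical points of a Morse function on `X`, together with the Morse index,
  is abstracted as a finite type `σ` equipped with an index function `ind : σ → ℤ`.
* Twisting cocycles, `A∞`-modules over `C_*(ΩX)`, enriched Morse complexes,
  continuation cocycles and the associated maps are encoded exactly by the formulas of
  the paper, with explicit Koszul signs.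
-/

noncomputable section

namespace CSDG

/-- A connective, unital differential graded algebra over `ℤ`, modelling the cubical
chains `C_*(ΩX)` on the Moore loop space of a pointed manifold under the Pontryagin
product. -/
structure DGA (A : Type) [AddCommGroup A] : Type where
  grade : ℤ → Submodule ℤ A
  internal : DirectSum.IsInternal grade
  grade_neg : ∀ i : ℤ, i < 0 → grade i = ⊥
  one : A
  one_mem : one ∈ grade 0
  d : A →ₗ[ℤ] A
  mul : A →ₗ[ℤ] A →ₗ[ℤ] A
  d_mem : ∀ (i : ℤ), ∀ a ∈ grade i, d a ∈ grade (i - 1)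
  mul_mem : ∀ (i j : ℤ), ∀ a ∈ grade i, ∀ b ∈ grade j, mul a b ∈ grade (i + j)
  d_d : ∀ a, d (d a) = 0
  mul_assoc' : ∀ a b c, mul (mul a b) c = mul a (mul b c)
  one_mul' : ∀ a, mul one a = a
  mul_one' : ∀ a, mul a one = a
  d_one : d one = 0
  leibniz : ∀ (i : ℤ), ∀ a ∈ grade i, ∀ b,
    d (mul a b) = mul (d a) b + ((Int.negOnePow i : ℤˣ) : ℤ) • mul a (d b)

variable {A M N : Type} [AddCommGroup A] [AddCommGroup M] [AddCommGroup N]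

/-- The first `j` entries of a tuple of `n` elements. -/
def firstSeg {α : Type} {n : ℕ} (γ : Fin n → α) (j : Fin (n + 1)) : Fin (j : ℕ) → α :=
  fun i => γ ⟨(i : ℕ), by have hi := i.isLt; have hj := j.isLt; omega⟩

/-- The last `n - j` entries of a tuple of `n` elements. -/
def lastSeg {α : Type} {n : ℕ} (γ : Fin n → α) (j : Fin (n + 1)) : Fin (n - (j : ℕ)) → α :=
  fun i => γ ⟨(j : ℕ) + (i : ℕ), by have hi := i.isLt; omega⟩

/-- The tuple obtained from an `n`-tuple by multiplying the entries in positions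
`r` and `r+1` (0-indexed). -/
def mergeSeg (Ω : DGA A) {n : ℕ} (γ : Fin n → A) (r : Fin (n - 1)) : Fin (n - 1) → A :=
  fun i =>
    if (i : ℕ) < (r : ℕ) then γ ⟨(i : ℕ), by have := i.isLt; omega⟩
    else if (i : ℕ) = (r : ℕ) then
      Ω.mul (γ ⟨(r : ℕ), by have := r.isLt; omega⟩) (γ ⟨(r : ℕ) + 1, by have := r.isLt; omega⟩)
    else γ ⟨(i : ℕ) + 1, by have := i.isLt; omega⟩

/-- Koszul sign exponent `N + |α| + Σ_{i<r} |γ_i|` appearing in front of the term where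
`μ₁` is inserted in the `r`-th loop slot. -/
def muOneExp {n : ℕ} (a : ℤ) (g : Fin n → ℤ) (r : Fin n) : ℤ :=
  (n : ℤ) + a + ∑ i : Fin n, if (i : ℕ) < (r : ℕ) then g i else 0

/-- An `A∞`-module over the DGA `Ω` (thought of as `C_*(ΩX)`): an internally graded
abelian group with multilinear operations `ν k : M ⊗ Ω^{⊗ k} → M` of degree `k - 1`
(`ν k` is `ν_{k+1}` of the paper, and `ν 0` is the differential), satisfying the
`A∞`-module relations, written on homogeneous elements with Koszul signs. -/
structure AInfModule (Ω : DGA A) (M : Type) [AddCommGroup M] : Type where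
  grade : ℤ → Submodule ℤ M
  internal : DirectSum.IsInternal grade
  ν : (k : ℕ) → M →ₗ[ℤ] MultilinearMap ℤ (fun _ : Fin k => A) M
  ν_mem : ∀ (k : ℕ) (a : ℤ) (g : Fin k → ℤ) (α : M) (γ : Fin k → A),
      α ∈ grade a → (∀ i, γ i ∈ Ω.grade (g i)) →
      ν k α γ ∈ grade (a + (∑ i, g i) + ((k : ℤ) - 1))
  rel : ∀ (n : ℕ) (a : ℤ) (g : Fin n → ℤ) (α : M) (γ : Fin n → A),
      α ∈ grade a → (∀ i, γ i ∈ Ω.grade (g i)) →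
      (∑ j : Fin (n + 1),
          ((Int.negOnePow ((((j : ℕ) : ℤ) + 1) * ((n : ℤ) - ((j : ℕ) : ℤ))) : ℤˣ) : ℤ) •
            ν (n - (j : ℕ)) (ν (j : ℕ) α (firstSeg γ j)) (lastSeg γ j))
        + (∑ r : Fin n, ((Int.negOnePow (muOneExp a g r) : ℤˣ) : ℤ) •
            ν n α (Function.update γ r (Ω.d (γ r))))
        + (∑ r : Fin (n - 1), ((Int.negOnePow (((r : ℕ) : ℤ) + 1) : ℤˣ) : ℤ) •
            ν (n - 1) α (mergeSeg Ω γ r)) = 0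

/-- A morphism of `A∞`-modules over the DGA `Ω`: a family of multilinear maps
`φ k : M ⊗ Ω^{⊗ k} → N` of degree `k` (`φ k` is `φ_{k+1}` of the paper) satisfying
the `A∞`-morphism relations, written on homogeneous elements with Koszul signs. -/
structure AInfMorphism (Ω : DGA A) (𝓐 : AInfModule Ω M) (𝓑 : AInfModule Ω N) : Type where
  φ : (k : ℕ) → M →ₗ[ℤ] MultilinearMap ℤ (fun _ : Fin k => A) N
  φ_mem : ∀ (k : ℕ) (a : ℤ) (g : Fin k → ℤ) (α : M) (γ : Fin k → A),
      α ∈ 𝓐.grade a → (∀ i, γ i ∈ Ω.grade (g i)) →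
      φ k α γ ∈ 𝓑.grade (a + (∑ i, g i) + (k : ℤ))
  rel : ∀ (n : ℕ) (a : ℤ) (g : Fin n → ℤ) (α : M) (γ : Fin n → A),
      α ∈ 𝓐.grade a → (∀ i, γ i ∈ Ω.grade (g i)) →
      (∑ j : Fin (n + 1),
          ((Int.negOnePow (((n : ℤ) - ((j : ℕ) : ℤ)) * (((j : ℕ) : ℤ) + 1)) : ℤˣ) : ℤ) •
            φ (n - (j : ℕ)) (𝓐.ν (j : ℕ) α (firstSeg γ j)) (lastSeg γ j))
        + (∑ r : Fin n, ((Int.negOnePow (muOneExp a g r) : ℤˣ) : ℤ) •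
            φ n α (Function.update γ r (Ω.d (γ r))))
        + (∑ r : Fin (n - 1), ((Int.negOnePow (((r : ℕ) : ℤ) + 1) : ℤˣ) : ℤ) •
            φ (n - 1) α (mergeSeg Ω γ r))
      = ∑ j : Fin (n + 1),
          ((Int.negOnePow (((n : ℤ) - ((j : ℕ) : ℤ)) * ((j : ℕ) : ℤ)) : ℤˣ) : ℤ) •
            𝓑.ν (n - (j : ℕ)) (φ (j : ℕ) α (firstSeg γ j)) (lastSeg γ j)

/-- A twisting cocycle over a Morse function, i.e. a family
`m x y ∈ C_{|x|-|y|-1}(ΩX)` indexed by pairs of critical points, satisfying the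
Maurer–Cartan equation. -/
structure Twisting (Ω : DGA A) (σ : Type) [Fintype σ] (ind : σ → ℤ) : Type where
  m : σ → σ → A
  mem : ∀ x y, m x y ∈ Ω.grade (ind x - ind y - 1)
  maurer_cartan : ∀ x y,
    Ω.d (m x y) =
      ∑ z : σ, ((Int.negOnePow (ind x - ind z) : ℤˣ) : ℤ) • Ω.mul (m x z) (m z y)

section Enriched

variable {σ : Type} [Fintype σ] [DecidableEq σ] {ind : σ → ℤ}

/-- Nodes preceding each step in a chain of Morse trajectories starting at `x`. -/
def prevNode (x : σ) {n : ℕ} (z : Fin n → σ) (i : Fin n) : σ :=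
  if (i : ℕ) = 0 then x else z ⟨(i : ℕ) - 1, by have := i.isLt; omega⟩

/-- The last node of a chain starting at `x` (which is `x` itself if the chain is empty). -/
def lastNode (x : σ) {n : ℕ} (z : Fin n → σ) : σ :=
  if h : n = 0 then x else z ⟨n - 1, by omega⟩

/-- The tuple of loop-space chains `m_{x,z₁} ⊗ m_{z₁,z₂} ⊗ ⋯` along a chain of critical
points. -/
def chainLoops {Ω : DGA A} (T : Twisting Ω σ ind) (x : σ) {n : ℕ} (z : Fin n → σ) :
    Fin n → A :=
  fun i => T.m (prevNode x z i) (z i)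

/-- The total Koszul sign exponent produced by the `n`-fold application of the degree `-1`
operator `m̃` to `α ⊗ x`, for `α` of degree `a`. -/
def chainExp (ind : σ → ℤ) (a : ℤ) (x : σ) {n : ℕ} (z : Fin n → σ) : ℤ :=
  (n : ℤ) * a + ∑ i : Fin n,
    ((n : ℤ) - 1 - ((i : ℕ) : ℤ)) * (ind (prevNode x z i) - ind (z i) - 1)

/-- The value on the homogeneous generator `α ⊗ x` (with `α` of degree `a`) of the
twisted differential `∂ = Σ_{n≥0} (ν_{n+1} ⊗ 1) m̃ⁿ` of the enriched Morse complex
`C_*(X, m, 𝓕) = 𝓕 ⊗ ℤ⟨Crit f⟩`.  The sum over `n` is finite because `m̃` strictly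
decreases the Morse index, and is truncated (exactly) at the number of critical
points. -/
def enrichedDSingle {Ω : DGA A} (𝓕 : AInfModule Ω M) (T : Twisting Ω σ ind)
    (a : ℤ) (α : M) (x : σ) : σ → M :=
  ∑ n ∈ Finset.range (Fintype.card σ + 1), ∑ z : Fin n → σ,
    Pi.single (lastNode x z)
      (((Int.negOnePow (chainExp ind a x z) : ℤˣ) : ℤ) • 𝓕.ν n α (chainLoops T x z))

/-- The grading of the enriched Morse complex `𝓕 ⊗ ℤ⟨Crit f⟩`:
`(𝓕 ⊗ ℤ⟨Crit f⟩)_k = ⊕_x 𝓕_{k - |x|}`. -/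
def enrGrade (gr : ℤ → Submodule ℤ M) (ind : σ → ℤ) (k : ℤ) : Submodule ℤ (σ → M) :=
  Submodule.pi Set.univ fun x => gr (k - ind x)

end Enriched

end CSDG
namespace CSDG

variable {A M N : Type} [AddCommGroup A] [AddCommGroup M] [AddCommGroup N]
variable {σ : Type} [Fintype σ] [DecidableEq σ] {ind : σ → ℤ}

/-- Value on the homogeneous generator `α ⊗ x` (with `α` of degree `a`) of the map
`φ̃ = Σ_{n≥0} (φ_{n+1} ⊗ 1) m̃ⁿ` induced by a morphism of `A∞`-modules `φ`. -/
def inducedSingle {Ω : DGA A} {𝓐 : AInfModule Ω M} {𝓑 : AInfModule Ω N}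
    (φ : AInfMorphism Ω 𝓐 𝓑) (T : Twisting Ω σ ind) (a : ℤ) (α : M) (x : σ) : σ → N :=
  ∑ n ∈ Finset.range (Fintype.card σ + 1), ∑ z : Fin n → σ,
    Pi.single (lastNode x z)
      (((Int.negOnePow (chainExp ind a x z) : ℤˣ) : ℤ) • φ.φ n α (chainLoops T x z))

end CSDG

/-!
Both `∂ ∘ φ̃` and `φ̃ ∘ ∂` send a generator `α ⊗ x` to a sum over chains of critical points
`x = z₀, z₁, …, z_l`, each chain split into an initial segment whose loops
`m_{z₀,z₁} ⊗ ⋯` are fed to the inner map and a final segment fed to the outer one; the Koszul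
signs of the two pieces add up to those of the concatenated chain. For a fixed chain, the
`A∞`-morphism relation of `φ` on its loops says that the two composites differ by a `μ₁`-term and
a `μ₂`-term. By the Maurer–Cartan equation, the `μ₁`-terms of chains of length `l` cancel the
`μ₂`-terms of chains of length `l + 1`, so the difference telescopes to zero. All sums are finite
because a nonzero `m_{x,y}` strictly lowers the Morse index.
-/

open Finset

lemma AddMonoidHom.pi_ext_of_isInternal {ι σ R M X : Type*} [DecidableEq ι]
    [DecidableEq σ] [Finite σ] [Semiring R] [AddCommMonoid M] [Module R M] [AddCommMonoid X]
    {gr : ι → Submodule R M} (h : DirectSum.IsInternal gr) {f g : (σ → M) →+ X}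
    (hfg : ∀ i, ∀ α ∈ gr i, ∀ x, f (Pi.single x α) = g (Pi.single x α)) : f = g := by
  refine AddMonoidHom.functions_ext _ f g fun x α => ?_
  have hα : α ∈ ⨆ i, gr i := by
    rw [h.submodule_iSup_eq_top]
    trivial
  refine Submodule.iSup_induction gr (motive := fun α => f (Pi.single x α) = g (Pi.single x α))
    hα (fun i α hα => hfg i α hα x) (by simp only [Pi.single_zero, map_zero]) fun α β hα hβ => ?_
  rw [Pi.single_add, map_add, map_add, hα, hβ]

namespace CSDG

local notation "𝔰" e:max => ((Int.negOnePow e : ℤˣ) : ℤ)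

lemma negOnePow_val_add (a b : ℤ) : 𝔰 (a + b) = 𝔰 a * 𝔰 b := by
  rw [Int.negOnePow_add, Units.val_mul]

lemma negOnePow_val_eq_of_even_sub {a b : ℤ} (h : Even (a - b)) : 𝔰 a = 𝔰 b := by
  rw [(Int.negOnePow_eq_iff a b).2 h]

lemma negOnePow_val_eq_neg_of_odd_sub {a b : ℤ} (h : Odd (a - b)) : 𝔰 a = -𝔰 b := by
  rw [show a = (a - b) + b by ring, negOnePow_val_add, Int.negOnePow_odd _ h]
  simp

lemma sum_range_sub_sub_one (u : ℕ → ℤ) (n : ℕ) :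
    ∑ i ∈ range n, (u i - u (i + 1) - 1) = u 0 - u n - n := by
  rw [sum_sub_distrib, sum_range_sub', sum_const, card_range, nsmul_one]

lemma sum_range_ite_lt_sub_sub_one (u : ℕ → ℤ) {r n : ℕ} (hr : r ≤ n) :
    ∑ i ∈ range n, (if i < r then u i - u (i + 1) - 1 else 0) = u 0 - u r - r := by
  rw [← sum_filter, ← sum_range_sub_sub_one]
  congr 1
  ext i
  simp only [mem_filter, mem_range]
  omega

lemma sum_range_weighted_sub_sub_one (u : ℕ → ℤ) (n : ℕ) :
    ∑ i ∈ range n, ((n : ℤ) - 1 - i) * (u i - u (i + 1) - 1)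
      = ∑ i ∈ range n, (u 0 - u i) - ∑ i ∈ range n, (i : ℤ) := by
  induction n with
  | zero => simp
  | succ n ih =>
    have hweight : ∀ i ∈ range n, ((↑(n + 1) : ℤ) - 1 - i) * (u i - u (i + 1) - 1)
        = ((n : ℤ) - 1 - i) * (u i - u (i + 1) - 1) + (u i - u (i + 1) - 1) := by
      intro i _; push_cast; ring
    rw [sum_range_succ, sum_congr rfl hweight, sum_add_distrib, ih, sum_range_sub_sub_one,
      sum_range_succ (fun i => (i : ℤ)), sum_range_succ (fun i => u 0 - u i)]
    push_cast; ring

lemma sum_range_add_id (n k : ℕ) :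
    ∑ i ∈ range (n + k), (i : ℤ)
      = ∑ i ∈ range n, (i : ℤ) + ∑ i ∈ range k, (i : ℤ) + k * n := by
  rw [sum_range_add]
  push_cast
  rw [sum_add_distrib, sum_const, card_range, nsmul_eq_mul]
  ring

lemma sum_range_succ_of_insert (v v' : ℕ → ℤ) {l r : ℕ} (hr : r < l)
    (hle : ∀ i ≤ r, v' i = v i) (hgt : ∀ i, r + 2 ≤ i → i ≤ l → v' i = v (i - 1)) :
    ∑ i ∈ range (l + 1), v' i = ∑ i ∈ range l, v i + v' (r + 1) := by
  obtain ⟨d, rfl⟩ : ∃ d, l = r + 1 + d := ⟨l - r - 1, by omega⟩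
  rw [show r + 1 + d + 1 = r + 1 + (1 + d) by omega, sum_range_add v' (r + 1) (1 + d),
    sum_range_add v (r + 1) d, sum_range_add _ 1 d,
    sum_congr rfl fun i hi => hle i (Nat.lt_succ_iff.1 (mem_range.1 hi))]
  have hshift : ∀ i ∈ range d, v' (r + 1 + (1 + i)) = v (r + 1 + i) := fun i hi => by
    rw [hgt _ (by omega) (by have := mem_range.1 hi; omega)]; congr 1; omega
  rw [sum_congr rfl hshift]
  simp only [range_one, sum_singleton, add_zero]
  ring

lemma sum_range_sum_range_eq_sum_antidiagonal {β : Type*} [AddCommMonoid β] (L : ℕ)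
    (f : ℕ × ℕ → β) (hf : ∀ p : ℕ × ℕ, L ≤ p.1 ∨ L ≤ p.2 → f p = 0) :
    ∑ n ∈ range L, ∑ k ∈ range L, f (n, k)
      = ∑ l ∈ range (2 * L), ∑ p ∈ antidiagonal l, f p := by
  have hdisj : (↑(range (2 * L)) : Set ℕ).PairwiseDisjoint
      (fun l => (antidiagonal l : Finset (ℕ × ℕ))) := by
    intro i _ j _ hij
    simp only [Function.onFun, disjoint_left, HasAntidiagonal.mem_antidiagonal]
    intro p hi hj
    exact hij (hi.symm.trans hj)
  rw [← sum_product', ← sum_biUnion hdisj]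
  refine sum_subset (fun p hp => ?_) fun p _ hp => hf p ?_
  · simp only [mem_product, mem_range] at hp
    simp only [mem_biUnion, mem_range, HasAntidiagonal.mem_antidiagonal]
    exact ⟨p.1 + p.2, by omega, rfl⟩
  · simp only [mem_product, mem_range] at hp
    omega

lemma sum_chains_eq_sum_chains_split {σ β : Type} [Fintype σ] [AddCommMonoid β] (L : ℕ)
    (G : (l : ℕ) → (Fin l → σ) → Fin (l + 1) → β)
    (hG : ∀ l c (j : Fin (l + 1)), L ≤ j ∨ L ≤ l - j → G l c j = 0) :
    ∑ n ∈ range L, ∑ k ∈ range L, ∑ c : Fin (n + k) → σ, G (n + k) c ⟨n, by omega⟩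
      = ∑ l ∈ range (2 * L), ∑ c : Fin l → σ, ∑ j, G l c j := by
  rw [sum_range_sum_range_eq_sum_antidiagonal L
    (fun p => ∑ c : Fin (p.1 + p.2) → σ, G _ c ⟨p.1, by omega⟩)
    fun p hp => sum_eq_zero fun c _ => hG _ _ _ (by simpa using hp)]
  refine sum_congr rfl fun l _ => ?_
  have hsplit : ∀ p ∈ antidiagonal l, ∑ c : Fin (p.1 + p.2) → σ, G _ c ⟨p.1, by omega⟩
      = ∑ c : Fin l → σ, if h : p.1 < l + 1 then G l c ⟨p.1, h⟩ else 0 := by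
    rintro ⟨n, k⟩ hp
    rw [HasAntidiagonal.mem_antidiagonal] at hp
    subst hp
    exact sum_congr rfl fun c _ => by rw [dif_pos (by simp)]
  rw [sum_congr rfl hsplit,
    Nat.sum_antidiagonal_eq_sum_range_succ (fun j _ => ∑ c : Fin l → σ,
      if h : j < l + 1 then G l c ⟨j, h⟩ else 0),
    ← Fin.sum_univ_eq_sum_range, sum_comm]
  exact sum_congr rfl fun c _ => sum_congr rfl fun j _ => dif_pos j.isLt

section Chains

variable {A : Type} [AddCommGroup A] {Ω : DGA A} {σ : Type} {ind : σ → ℤ}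

/-- `node x c i` is the `i`-th critical point of the chain `x → c 0 → c 1 → ⋯`; indices past
the end give `x` and are never used. -/
def node (x : σ) {n : ℕ} (c : Fin n → σ) : ℕ → σ
  | 0 => x
  | i + 1 => if h : i < n then c ⟨i, h⟩ else x

def loopDeg (ind : σ → ℤ) (x : σ) {n : ℕ} (c : Fin n → σ) (i : Fin n) : ℤ :=
  ind (prevNode x c i) - ind (c i) - 1

lemma node_succ (x : σ) {n : ℕ} (c : Fin n → σ) {i : ℕ} (h : i < n) :
    node x c (i + 1) = c ⟨i, h⟩ :=
  dif_pos h

lemma prevNode_eq_node (x : σ) {n : ℕ} (c : Fin n → σ) (i : Fin n) :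
    prevNode x c i = node x c i := by
  obtain ⟨_ | j, hj⟩ := i
  · rfl
  · simp [prevNode, node, Nat.lt_of_succ_lt hj]

lemma lastNode_eq_node (x : σ) {n : ℕ} (c : Fin n → σ) : lastNode x c = node x c n := by
  cases n with
  | zero => rfl
  | succ m => simp [lastNode, node]

lemma chainLoops_eq_node [Fintype σ] (T : Twisting Ω σ ind) (x : σ) {n : ℕ} (c : Fin n → σ)
    (i : Fin n) :
    chainLoops T x c i = T.m (node x c i) (node x c (i + 1)) := by
  rw [chainLoops, prevNode_eq_node, node_succ x c i.isLt]

lemma chainLoops_mem [Fintype σ] (T : Twisting Ω σ ind) (x : σ) {n : ℕ} (c : Fin n → σ)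
    (i : Fin n) :
    chainLoops T x c i ∈ Ω.grade (loopDeg ind x c i) :=
  T.mem _ _

lemma loopDeg_eq_node (x : σ) {n : ℕ} (c : Fin n → σ) (i : Fin n) :
    loopDeg ind x c i = ind (node x c i) - ind (node x c (i + 1)) - 1 := by
  rw [loopDeg, prevNode_eq_node, node_succ x c i.isLt]

lemma sum_loopDeg (x : σ) {n : ℕ} (c : Fin n → σ) :
    ∑ i, loopDeg ind x c i = ind x - ind (lastNode x c) - n := by
  simp only [loopDeg_eq_node]
  rw [Fin.sum_univ_eq_sum_range (fun i => ind (node x c i) - ind (node x c (i + 1)) - 1),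
    sum_range_sub_sub_one, lastNode_eq_node]
  rfl

lemma sum_loopDeg_of_lt (x : σ) {n : ℕ} (c : Fin n → σ) {r : ℕ} (hr : r ≤ n) :
    ∑ i : Fin n, (if (i : ℕ) < r then loopDeg ind x c i else 0)
      = ind x - ind (node x c r) - r := by
  simp only [loopDeg_eq_node]
  rw [Fin.sum_univ_eq_sum_range
      (fun i => if i < r then ind (node x c i) - ind (node x c (i + 1)) - 1 else 0),
    sum_range_ite_lt_sub_sub_one _ hr]
  rfl

lemma chainExp_eq (x : σ) (a : ℤ) {n : ℕ} (c : Fin n → σ) :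
    chainExp ind a x c
      = n * a + ∑ i ∈ range n, (ind x - ind (node x c i)) - ∑ i ∈ range n, (i : ℤ) := by
  have hsum := sum_range_weighted_sub_sub_one (fun i => ind (node x c i)) n
  rw [← Fin.sum_univ_eq_sum_range] at hsum
  simp only [← loopDeg_eq_node] at hsum
  change n * a + ∑ i, ((n : ℤ) - 1 - i) * loopDeg ind x c i = _
  rw [hsum, add_sub_assoc]
  rfl

lemma chainExp_add (x : σ) (a d : ℤ) {n : ℕ} (c : Fin n → σ) :
    chainExp ind (a + d) x c = chainExp ind a x c + n * d := by
  simp only [chainExp]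
  ring

lemma node_append_of_le (x : σ) {n k : ℕ} (z : Fin n → σ) (w : Fin k → σ) {i : ℕ}
    (hi : i ≤ n) : node x (Fin.append z w) i = node x z i := by
  cases i with
  | zero => rfl
  | succ j =>
    rw [node_succ _ _ (by omega : j < n + k), node_succ _ _ (by omega : j < n)]
    exact Fin.append_left z w ⟨j, _⟩

lemma node_append_add (x : σ) {n k : ℕ} (z : Fin n → σ) (w : Fin k → σ) {i : ℕ}
    (hi : i ≤ k) : node x (Fin.append z w) (n + i) = node (lastNode x z) w i := by
  cases i with
  | zero => rw [Nat.add_zero, node_append_of_le x z w le_rfl, lastNode_eq_node]; rfl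
  | succ j =>
    rw [← Nat.add_assoc, node_succ _ _ (by omega : n + j < n + k), node_succ _ _ (by omega)]
    exact Fin.append_right z w ⟨j, _⟩

lemma lastNode_append (x : σ) {n k : ℕ} (z : Fin n → σ) (w : Fin k → σ) :
    lastNode x (Fin.append z w) = lastNode (lastNode x z) w := by
  rw [lastNode_eq_node x (Fin.append z w), node_append_add x z w le_rfl, ← lastNode_eq_node]

lemma chainLoops_append_castAdd [Fintype σ] (T : Twisting Ω σ ind) (x : σ) {n k : ℕ}
    (z : Fin n → σ) (w : Fin k → σ) (i : Fin n) :
    chainLoops T x (Fin.append z w) (Fin.castAdd k i) = chainLoops T x z i := by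
  rw [chainLoops_eq_node, chainLoops_eq_node, Fin.val_castAdd,
    node_append_of_le x z w i.isLt.le, node_append_of_le x z w i.isLt]

lemma chainLoops_append_natAdd [Fintype σ] (T : Twisting Ω σ ind) (x : σ) {n k : ℕ}
    (z : Fin n → σ) (w : Fin k → σ) (i : Fin k) :
    chainLoops T x (Fin.append z w) (Fin.natAdd n i) = chainLoops T (lastNode x z) w i := by
  rw [chainLoops_eq_node, chainLoops_eq_node, Fin.val_natAdd, Nat.add_assoc,
    node_append_add x z w i.isLt.le, node_append_add x z w i.isLt]

lemma chainExp_append (x : σ) (a : ℤ) {n k : ℕ} (z : Fin n → σ) (w : Fin k → σ) :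
    chainExp ind a x z + chainExp ind (a + (ind x - ind (lastNode x z))) (lastNode x z) w
      = chainExp ind a x (Fin.append z w) + k * n := by
  set y := lastNode x z
  have hsplit : ∑ i ∈ range (n + k), (ind x - ind (node x (Fin.append z w) i))
      = ∑ i ∈ range n, (ind x - ind (node x z i))
        + ∑ i ∈ range k, (ind y - ind (node y w i)) + k * (ind x - ind y) := by
    have hleft : ∀ i ∈ range n, ind x - ind (node x (Fin.append z w) i)
        = ind x - ind (node x z i) := fun i hi => by
      rw [node_append_of_le x z w (mem_range.1 hi).le]
    have hright : ∀ i ∈ range k, ind x - ind (node x (Fin.append z w) (n + i))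
        = (ind y - ind (node y w i)) + (ind x - ind y) := fun i hi => by
      rw [node_append_add x z w (mem_range.1 hi).le]
      ring
    rw [sum_range_add, sum_congr rfl hleft, sum_congr rfl hright, sum_add_distrib, sum_const,
      card_range, nsmul_eq_mul, add_assoc]
  rw [chainExp_add, chainExp_eq, chainExp_eq, chainExp_eq, hsplit, sum_range_add_id]
  push_cast
  ring

lemma node_insertNth_of_le (x z : σ) {n : ℕ} (c : Fin n → σ) (r : Fin n) {i : ℕ}
    (hi : i ≤ r) : node x (Fin.insertNth r.castSucc z c) i = node x c i := by
  cases i with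
  | zero => rfl
  | succ j =>
    rw [node_succ _ _ (by omega : j < n + 1), node_succ _ _ (by omega : j < n)]
    have hj : (⟨j, by omega⟩ : Fin (n + 1)) = r.castSucc.succAbove ⟨j, by omega⟩ :=
      (Fin.succAbove_of_castSucc_lt r.castSucc ⟨j, by omega⟩
        (Fin.castSucc_lt_castSucc_iff.2 (show j < (r : ℕ) by omega))).symm
    rw [hj, Fin.insertNth_apply_succAbove]

lemma node_insertNth_succ (x z : σ) {n : ℕ} (c : Fin n → σ) (r : Fin n) :
    node x (Fin.insertNth r.castSucc z c) (r + 1) = z := by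
  rw [node_succ _ _ (by omega : (r : ℕ) < n + 1)]
  exact Fin.insertNth_apply_same _ _ _

lemma node_insertNth_of_lt (x z : σ) {n : ℕ} (c : Fin n → σ) (r : Fin n) {i : ℕ}
    (hri : r + 2 ≤ i) (hi : i ≤ n + 1) :
    node x (Fin.insertNth r.castSucc z c) i = node x c (i - 1) := by
  obtain ⟨j, rfl⟩ : ∃ j, i = j + 2 := ⟨i - 2, by omega⟩
  rw [node_succ _ _ (by omega : j + 1 < n + 1), show j + 2 - 1 = j + 1 from rfl,
    node_succ _ _ (by omega : j < n)]
  have hj : (⟨j + 1, by omega⟩ : Fin (n + 1)) = r.castSucc.succAbove ⟨j, by omega⟩ :=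
    (Fin.succAbove_of_le_castSucc r.castSucc ⟨j, by omega⟩
      (Fin.castSucc_le_castSucc_iff.2 (show (r : ℕ) ≤ j by omega))).symm
  rw [hj, Fin.insertNth_apply_succAbove]

lemma lastNode_insertNth (x z : σ) {n : ℕ} (c : Fin n → σ) (r : Fin n) :
    lastNode x (Fin.insertNth r.castSucc z c) = lastNode x c := by
  rw [lastNode_eq_node, lastNode_eq_node, node_insertNth_of_lt x z c r (by omega) le_rfl]
  rfl

lemma chainExp_insertNth (x z : σ) (a : ℤ) {n : ℕ} (c : Fin n → σ) (r : Fin n) :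
    chainExp ind a x (Fin.insertNth r.castSucc z c)
      = chainExp ind a x c + a + ind x - ind z - n := by
  have hins : ∑ i ∈ range (n + 1), (ind x - ind (node x (Fin.insertNth r.castSucc z c) i))
      = ∑ i ∈ range n, (ind x - ind (node x c i)) + (ind x - ind z) := by
    rw [sum_range_succ_of_insert (fun i => ind x - ind (node x c i)) _ r.isLt
      (fun i hi => by rw [node_insertNth_of_le x z c r hi])
      (fun i hri hi => by rw [node_insertNth_of_lt x z c r hri (by omega)]),
      node_insertNth_succ]
  rw [chainExp_eq, chainExp_eq, hins, sum_range_succ (fun i => (i : ℤ))]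
  push_cast
  ring

lemma mergeSeg_chainLoops_insertNth [Fintype σ] (T : Twisting Ω σ ind) (x z : σ) {n : ℕ}
    (c : Fin n → σ) (r : Fin n) :
    mergeSeg Ω (chainLoops T x (Fin.insertNth r.castSucc z c)) ⟨r, by omega⟩
      = Function.update (chainLoops T x c) r
          (Ω.mul (T.m (node x c r) z) (T.m z (node x c (r + 1)))) := by
  funext i
  simp only [mergeSeg, chainLoops_eq_node]
  rcases lt_trichotomy (i : ℕ) r with hlt | heq | hgt
  · rw [if_pos hlt, Function.update_of_ne (Fin.ne_of_lt hlt), chainLoops_eq_node,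
      node_insertNth_of_le x z c r hlt.le, node_insertNth_of_le x z c r hlt]
  · obtain rfl : i = r := Fin.ext heq
    rw [if_neg (lt_irrefl _), if_pos rfl, Function.update_self,
      node_insertNth_of_le x z c i le_rfl, node_insertNth_succ,
      node_insertNth_of_lt x z c i (by omega) (by omega)]
    rfl
  · rw [if_neg (by omega), if_neg (by omega), Function.update_of_ne (Fin.ne_of_gt hgt),
      chainLoops_eq_node, node_insertNth_of_lt x z c r (by omega) (by omega),
      node_insertNth_of_lt x z c r (by omega) (by omega)]
    rfl

lemma Twisting.m_eq_zero_of_le [Fintype σ] (T : Twisting Ω σ ind) {x y : σ}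
    (h : ind x ≤ ind y) : T.m x y = 0 := by
  have hm := T.mem x y
  rwa [Ω.grade_neg _ (by omega), Submodule.mem_bot] at hm

/-- A nonzero loop `T.m x y` forces `ind y < ind x`, so `card σ` consecutive nonzero loops would
visit `card σ + 1` distinct critical points. -/
lemma exists_chainLoops_eq_zero [Fintype σ] (T : Twisting Ω σ ind) (x : σ) {l : ℕ}
    (c : Fin l → σ) {s t : ℕ} (hst : s + Fintype.card σ ≤ t) (ht : t ≤ l) :
    ∃ i : Fin l, s ≤ i ∧ (i : ℕ) < t ∧ chainLoops T x c i = 0 := by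
  by_contra! hne
  have hanti : StrictAnti fun j : Fin (Fintype.card σ + 1) => ind (node x c (s + j)) := by
    rw [Fin.strictAnti_iff_succ_lt]
    intro j
    by_contra! hle
    simp only [Fin.val_succ, Fin.val_castSucc, ← Nat.add_assoc] at hle
    refine hne ⟨s + j, by omega⟩ (Nat.le_add_right _ _) (show s + (j : ℕ) < t by omega) ?_
    rw [chainLoops_eq_node]
    exact T.m_eq_zero_of_le hle
  have hcard := Fintype.card_le_of_injective _ (hanti.injective.of_comp (f := ind))
  simp at hcard

lemma mergeSeg_exists_eq_zero {l : ℕ} (γ : Fin l → A) (r : Fin (l - 1)) {p : Fin l}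
    (hp : γ p = 0) (hpr : (p : ℕ) ≠ r) (hpr' : (p : ℕ) ≠ r + 1) :
    ∃ q, mergeSeg Ω γ r q = 0 := by
  by_cases hlt : (p : ℕ) < r
  · refine ⟨⟨p, by omega⟩, ?_⟩
    simp only [mergeSeg, if_pos hlt]
    exact hp
  · refine ⟨⟨p - 1, by omega⟩, ?_⟩
    simp only [mergeSeg, if_neg (by omega : ¬ (p : ℕ) - 1 < r), if_neg (by omega : (p : ℕ) - 1 ≠ r)]
    rw [← hp]
    congr
    omega

end Chains

abbrev OpFamily (A P Q : Type) [AddCommGroup A] [AddCommGroup P] [AddCommGroup Q] : Type :=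
  (k : ℕ) → P →ₗ[ℤ] MultilinearMap ℤ (fun _ : Fin k => A) Q

lemma OpFamily.apply_congr {A P Q : Type} [AddCommGroup A] [AddCommGroup P] [AddCommGroup Q]
    (f : OpFamily A P Q) {k k' : ℕ} (h : k' = k) (β : P) {δ : Fin k' → A} {δ' : Fin k → A}
    (hδ : ∀ i, δ i = δ' (Fin.cast h i)) : f k' β δ = f k β δ' := by
  subst h
  exact congrArg (f k' β) (funext hδ)

section TwistedMaps

variable {A P Q R : Type} [AddCommGroup A] [AddCommGroup P] [AddCommGroup Q] [AddCommGroup R]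
  {Ω : DGA A}

def OpFamily.HasDegree (Ω : DGA A) (gP : ℤ → Submodule ℤ P) (gQ : ℤ → Submodule ℤ Q)
    (f : OpFamily A P Q) (d : ℤ) : Prop :=
  ∀ (k : ℕ) (a : ℤ) (g : Fin k → ℤ) (α : P) (γ : Fin k → A), α ∈ gP a →
    (∀ i, γ i ∈ Ω.grade (g i)) → f k α γ ∈ gQ (a + ∑ i, g i + k + d)

lemma AInfModule.hasDegree_ν (𝓕 : AInfModule Ω P) :
    OpFamily.HasDegree Ω 𝓕.grade 𝓕.grade 𝓕.ν (-1) := by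
  intro k a g α γ hα hγ
  rw [add_assoc _ (k : ℤ), ← sub_eq_add_neg]
  exact 𝓕.ν_mem k a g α γ hα hγ

lemma AInfMorphism.hasDegree_φ {𝓐 : AInfModule Ω P} {𝓑 : AInfModule Ω Q}
    (φ : AInfMorphism Ω 𝓐 𝓑) : OpFamily.HasDegree Ω 𝓐.grade 𝓑.grade φ.φ 0 := by
  intro k a g α γ hα hγ
  rw [add_zero]
  exact φ.φ_mem k a g α γ hα hγ

lemma single_negOnePow_smul_sum {σ ι : Type} [DecidableEq σ] (y : σ) (e : ℤ) (s : Finset ι)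
    (e' : ι → ℤ) (v : ι → Q) :
    (Pi.single y (𝔰 e • ∑ i ∈ s, 𝔰 (e' i) • v i) : σ → Q)
      = ∑ i ∈ s, Pi.single y (𝔰 (e + e' i) • v i) := by
  rw [smul_sum]
  simp only [smul_smul, ← negOnePow_val_add]
  exact map_sum (AddMonoidHom.single (fun _ : σ => Q) y) _ s

variable {σ : Type} [Fintype σ] [DecidableEq σ] {ind : σ → ℤ} (T : Twisting Ω σ ind)

/-- The map `f̃ = Σₙ (fₙ ⊗ 1) m̃ⁿ` on the generator `α ⊗ x`, `α` of degree `a`. -/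
def twistedSingle (f : OpFamily A P Q) (a : ℤ) (α : P) (x : σ) : σ → Q :=
  ∑ n ∈ range (Fintype.card σ + 1), ∑ z : Fin n → σ,
    Pi.single (lastNode x z) (𝔰 (chainExp ind a x z) • f n α (chainLoops T x z))

lemma enrichedDSingle_eq_twistedSingle (𝓕 : AInfModule Ω P) (a : ℤ) (α : P) (x : σ) :
    enrichedDSingle 𝓕 T a α x = twistedSingle T 𝓕.ν a α x :=
  rfl

lemma inducedSingle_eq_twistedSingle {𝓐 : AInfModule Ω P} {𝓑 : AInfModule Ω Q}
    (φ : AInfMorphism Ω 𝓐 𝓑) (a : ℤ) (α : P) (x : σ) :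
    inducedSingle φ T a α x = twistedSingle T φ.φ a α x :=
  rfl

/-- The contribution to `g̃ ∘ f̃ (α ⊗ x)` of the chain `c` whose first `j` loops are fed to `f`
and the remaining ones to `g`, where `f` has degree `d`. -/
def compTerm (f : OpFamily A P Q) (g : OpFamily A Q R) (d a : ℤ) (α : P) (x : σ) (l : ℕ)
    (c : Fin l → σ) (j : Fin (l + 1)) : σ → R :=
  Pi.single (lastNode x c)
    (𝔰 (chainExp ind a x c + ((l : ℤ) - j) * (j + d)) •
      g (l - j) (f j α (firstSeg (chainLoops T x c) j)) (lastSeg (chainLoops T x c) j))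

lemma compTerm_eq_zero (f : OpFamily A P Q) (g : OpFamily A Q R) (d a : ℤ) (α : P) (x : σ)
    {l : ℕ} (c : Fin l → σ) (j : Fin (l + 1))
    (h : Fintype.card σ + 1 ≤ j ∨ Fintype.card σ + 1 ≤ l - j) :
    compTerm T f g d a α x l c j = 0 := by
  rcases h with h | h
  · obtain ⟨i, -, hi, hz⟩ := exists_chainLoops_eq_zero T x c
      (s := 0) (t := Fintype.card σ) (by omega) (by omega)
    have hfirst : firstSeg (chainLoops T x c) j ⟨i, by omega⟩ = 0 := hz
    rw [compTerm, MultilinearMap.map_coord_zero _ _ hfirst, map_zero,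
      zero_apply, smul_zero, Pi.single_zero]
  · obtain ⟨i, hi, hi', hz⟩ := exists_chainLoops_eq_zero T x c
      (s := j) (t := j + Fintype.card σ) le_rfl (by omega)
    have hlast : lastSeg (chainLoops T x c) j ⟨i - j, by omega⟩ = 0 := by
      rw [← hz]
      exact congrArg (chainLoops T x c) (Fin.ext (show (j : ℕ) + (i - j) = i by omega))
    rw [compTerm, MultilinearMap.map_coord_zero _ _ hlast, smul_zero, Pi.single_zero]

lemma compTerm_congr_degree (f : OpFamily A P Q) (g : OpFamily A Q R) {d d' : ℤ}
    (hd : Even (d - d')) (a : ℤ) (α : P) (x : σ) {l : ℕ} (c : Fin l → σ) (j : Fin (l + 1)) :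
    compTerm T f g d a α x l c j = compTerm T f g d' a α x l c j := by
  obtain ⟨e, he⟩ := hd
  rw [compTerm, compTerm]
  congr 2
  exact negOnePow_val_eq_of_even_sub ⟨((l : ℤ) - j) * e, by linear_combination ((l : ℤ) - j) * he⟩

lemma compTerm_append (f : OpFamily A P Q) (g : OpFamily A Q R) (d a : ℤ) (α : P) (x : σ)
    {n k : ℕ} (z : Fin n → σ) (w : Fin k → σ) :
    compTerm T f g d a α x (n + k) (Fin.append z w) ⟨n, by omega⟩
      = Pi.single (lastNode (lastNode x z) w)
          (𝔰 (chainExp ind a x z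
              + chainExp ind (a + ∑ i, loopDeg ind x z i + n + d) (lastNode x z) w) •
            g k (f n α (chainLoops T x z)) (chainLoops T (lastNode x z) w)) := by
  have hfirst : firstSeg (chainLoops T x (Fin.append z w)) ⟨n, by omega⟩ = chainLoops T x z :=
    funext (chainLoops_append_castAdd T x z w)
  have hlast : g (n + k - n) (f n α (chainLoops T x z))
        (lastSeg (chainLoops T x (Fin.append z w)) ⟨n, by omega⟩)
      = g k (f n α (chainLoops T x z)) (chainLoops T (lastNode x z) w) :=
    OpFamily.apply_congr g (by omega) _ fun i => chainLoops_append_natAdd T x z w (Fin.cast _ i)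
  have hsign : chainExp ind a x (Fin.append z w) + (((n + k : ℕ) : ℤ) - n) * (n + d)
      = chainExp ind a x z
        + chainExp ind (a + ∑ i, loopDeg ind x z i + n + d) (lastNode x z) w := by
    rw [sum_loopDeg, show a + (ind x - ind (lastNode x z) - n) + n + d
      = a + (ind x - ind (lastNode x z)) + d by ring, chainExp_add, ← add_assoc, chainExp_append]
    push_cast
    ring
  rw [compTerm, lastNode_append, hfirst, hlast, hsign]

lemma map_twistedSingle (f : OpFamily A P Q) (g : OpFamily A Q R) {d : ℤ}
    {gP : ℤ → Submodule ℤ P} {gQ : ℤ → Submodule ℤ Q} (hf : OpFamily.HasDegree Ω gP gQ f d)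
    (G : (σ → Q) →+ (σ → R))
    (hG : ∀ (b : ℤ) (β : Q) (y : σ), β ∈ gQ b → G (Pi.single y β) = twistedSingle T g b β y)
    {a : ℤ} {α : P} (hα : α ∈ gP a) (x : σ) :
    G (twistedSingle T f a α x)
      = ∑ l ∈ range (2 * (Fintype.card σ + 1)), ∑ c : Fin l → σ, ∑ j,
          compTerm T f g d a α x l c j := by
  rw [← sum_chains_eq_sum_chains_split _ _ fun l c j h => compTerm_eq_zero T f g d a α x c j h]
  simp only [twistedSingle, map_sum]
  refine sum_congr rfl fun n _ => ?_
  have hsplit : ∀ z : Fin n → σ,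
      G (Pi.single (lastNode x z) (𝔰 (chainExp ind a x z) • f n α (chainLoops T x z)))
        = ∑ k ∈ range (Fintype.card σ + 1), ∑ w : Fin k → σ,
            compTerm T f g d a α x (n + k) (Fin.append z w) ⟨n, by omega⟩ := by
    intro z
    rw [Pi.single_smul, map_zsmul, hG _ _ _ (hf n a _ α _ hα (chainLoops_mem T x z)),
      twistedSingle, smul_sum]
    refine sum_congr rfl fun k _ => ?_
    rw [smul_sum]
    refine sum_congr rfl fun w _ => ?_
    rw [compTerm_append, ← Pi.single_smul, smul_smul, ← negOnePow_val_add]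
  rw [sum_congr rfl fun z _ => hsplit z, sum_comm]
  refine sum_congr rfl fun k _ => ?_
  rw [← Fintype.sum_prod_type', ← Equiv.sum_comp (Fin.appendEquiv n k)]
  rfl

end TwistedMaps

section InfinityMorphisms

variable {A P Q : Type} [AddCommGroup A] [AddCommGroup P] [AddCommGroup Q] {Ω : DGA A}
  {σ : Type} [Fintype σ] [DecidableEq σ] {ind : σ → ℤ} (T : Twisting Ω σ ind)

/-- The `μ₁`-terms of the `A∞`-relation of `f` on the loops of the chain `c`. -/
def diffTerm (f : OpFamily A P Q) (a : ℤ) (α : P) (x : σ) (l : ℕ) (c : Fin l → σ) : σ → Q :=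
  ∑ r : Fin l, Pi.single (lastNode x c)
    (𝔰 (chainExp ind a x c + muOneExp a (loopDeg ind x c) r) •
      f l α (Function.update (chainLoops T x c) r (Ω.d (chainLoops T x c r))))

/-- The `μ₂`-terms of the `A∞`-relation of `f` on the loops of the chain `c`. -/
def mergeTerm (f : OpFamily A P Q) (a : ℤ) (α : P) (x : σ) (l : ℕ) (c : Fin l → σ) : σ → Q :=
  ∑ r : Fin (l - 1), Pi.single (lastNode x c)
    (𝔰 (chainExp ind a x c + (r + 1)) • f (l - 1) α (mergeSeg Ω (chainLoops T x c) r))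

lemma AInfMorphism.sum_compTerm_eq {𝓐 : AInfModule Ω P} {𝓑 : AInfModule Ω Q}
    (φ : AInfMorphism Ω 𝓐 𝓑) {a : ℤ} {α : P} (hα : α ∈ 𝓐.grade a) (x : σ) {l : ℕ}
    (c : Fin l → σ) :
    ∑ j, compTerm T φ.φ 𝓑.ν 0 a α x l c j
      = ∑ j, compTerm T 𝓐.ν φ.φ (-1) a α x l c j
        + diffTerm T φ.φ a α x l c + mergeTerm T φ.φ a α x l c := by
  have hrel := congrArg (fun v => (Pi.single (lastNode x c) (𝔰 (chainExp ind a x c) • v) : σ → Q))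
    (φ.rel l a (loopDeg ind x c) α (chainLoops T x c) hα (chainLoops_mem T x c))
  simp only [smul_add, Pi.single_add, single_negOnePow_smul_sum] at hrel
  simp only [compTerm_congr_degree T 𝓐.ν φ.φ (d := -1) (d' := 1) ⟨-1, by norm_num⟩]
  simp only [compTerm, diffTerm, mergeTerm, add_zero]
  exact hrel.symm

/-- The Maurer–Cartan equation rewrites `μ₁` of the `r`-th loop as a sum of products of two loops
through an intermediate critical point `z`; inserting `z` into the chain turns each of them into
a merge term of the longer chain, with the opposite sign. -/
lemma diffTerm_summand_eq (f : OpFamily A P Q) (a : ℤ) (α : P) (x : σ) {l : ℕ}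
    (c : Fin l → σ) (r : Fin l) :
    (Pi.single (lastNode x c) (𝔰 (chainExp ind a x c + muOneExp a (loopDeg ind x c) r) •
        f l α (Function.update (chainLoops T x c) r (Ω.d (chainLoops T x c r)))) : σ → Q)
      = -∑ z, Pi.single (lastNode x (Fin.insertNth r.castSucc z c))
          (𝔰 (chainExp ind a x (Fin.insertNth r.castSucc z c) + (r + 1)) •
            f l α (mergeSeg Ω (chainLoops T x (Fin.insertNth r.castSucc z c)) ⟨r, by omega⟩)) := by
  have hmc : Ω.d (chainLoops T x c r) = ∑ z, 𝔰 (ind (node x c r) - ind z) •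
      Ω.mul (T.m (node x c r) z) (T.m z (node x c (r + 1))) := by
    rw [chainLoops_eq_node]
    exact T.maurer_cartan _ _
  rw [hmc, MultilinearMap.map_update_sum]
  simp only [MultilinearMap.map_update_smul]
  rw [single_negOnePow_smul_sum, ← sum_neg_distrib]
  refine sum_congr rfl fun z _ => ?_
  have hodd : Odd (chainExp ind a x c + muOneExp a (loopDeg ind x c) r
      + (ind (node x c r) - ind z)
      - (chainExp ind a x (Fin.insertNth r.castSucc z c) + (r + 1))) := by
    rw [chainExp_insertNth, muOneExp, sum_loopDeg_of_lt x c r.isLt.le]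
    exact ⟨l - r - 1, by ring⟩
  rw [lastNode_insertNth, mergeSeg_chainLoops_insertNth, negOnePow_val_eq_neg_of_odd_sub hodd,
    neg_smul, Pi.single_neg]

lemma sum_diffTerm_eq_neg_sum_mergeTerm (f : OpFamily A P Q) (a : ℤ) (α : P) (x : σ) (l : ℕ) :
    ∑ c : Fin l → σ, diffTerm T f a α x l c
      = -∑ c : Fin (l + 1) → σ, mergeTerm T f a α x (l + 1) c := by
  simp only [diffTerm, diffTerm_summand_eq, sum_neg_distrib, mergeTerm]
  rw [sum_comm, sum_comm (s := univ (α := Fin (l + 1) → σ))]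
  congr 1
  refine sum_congr rfl fun r _ => ?_
  rw [sum_comm, ← Fintype.sum_prod_type', ← Equiv.sum_comp (Fin.insertNthEquiv _ r.castSucc)]
  rfl

lemma mergeTerm_zero (f : OpFamily A P Q) (a : ℤ) (α : P) (x : σ) (c : Fin 0 → σ) :
    mergeTerm T f a α x 0 c = 0 :=
  sum_eq_zero fun r _ => absurd r.isLt (by omega)

/-- Merging adjacent loops cannot remove two zero loops that are at least two steps apart. -/
lemma mergeTerm_eq_zero (f : OpFamily A P Q) (a : ℤ) (α : P) (x : σ)
    (c : Fin (2 * (Fintype.card σ + 1)) → σ) :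
    mergeTerm T f a α x (2 * (Fintype.card σ + 1)) c = 0 := by
  refine sum_eq_zero fun r _ => ?_
  obtain ⟨i, -, hi, hz⟩ := exists_chainLoops_eq_zero T x c
    (s := 0) (t := Fintype.card σ) (by omega) (by omega)
  obtain ⟨i', hi', -, hz'⟩ := exists_chainLoops_eq_zero T x c
    (s := Fintype.card σ + 1) (t := 2 * Fintype.card σ + 1) (by omega) (by omega)
  obtain ⟨q, hq⟩ : ∃ q, mergeSeg Ω (chainLoops T x c) r q = 0 := by
    by_cases h : (i : ℕ) ≠ r ∧ (i : ℕ) ≠ r + 1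
    · exact mergeSeg_exists_eq_zero _ r hz h.1 h.2
    · exact mergeSeg_exists_eq_zero _ r hz' (by omega) (by omega)
  rw [MultilinearMap.map_coord_zero _ _ hq, smul_zero, Pi.single_zero]

lemma sum_diffTerm_add_sum_mergeTerm (f : OpFamily A P Q) (a : ℤ) (α : P) (x : σ) :
    ∑ l ∈ range (2 * (Fintype.card σ + 1)), ∑ c, diffTerm T f a α x l c
      + ∑ l ∈ range (2 * (Fintype.card σ + 1)), ∑ c, mergeTerm T f a α x l c = 0 := by
  have htel := sum_range_sub' (fun l => ∑ c : Fin l → σ, mergeTerm T f a α x l c)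
    (2 * (Fintype.card σ + 1))
  simp only [mergeTerm_zero, mergeTerm_eq_zero, sum_const_zero, sub_zero, sum_sub_distrib]
    at htel
  rw [sum_congr rfl fun l _ => sum_diffTerm_eq_neg_sum_mergeTerm T f a α x l, sum_neg_distrib,
    neg_add_eq_sub, htel]

lemma AInfMorphism.enrichedD_comp_induced_single {M N : Type} [AddCommGroup M] [AddCommGroup N]
    {𝓐 : AInfModule Ω M} {𝓑 : AInfModule Ω N} (φ : AInfMorphism Ω 𝓐 𝓑)
    {DA : (σ → M) →+ (σ → M)} {DB : (σ → N) →+ (σ → N)} {F : (σ → M) →+ (σ → N)}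
    (hDA : ∀ (a : ℤ) (α : M) (x : σ), α ∈ 𝓐.grade a →
      DA (Pi.single x α) = enrichedDSingle 𝓐 T a α x)
    (hDB : ∀ (b : ℤ) (β : N) (y : σ), β ∈ 𝓑.grade b →
      DB (Pi.single y β) = enrichedDSingle 𝓑 T b β y)
    (hF : ∀ (a : ℤ) (α : M) (x : σ), α ∈ 𝓐.grade a →
      F (Pi.single x α) = inducedSingle φ T a α x)
    {a : ℤ} {α : M} (hα : α ∈ 𝓐.grade a) (x : σ) :
    DB (F (Pi.single x α)) = F (DA (Pi.single x α)) := by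
  rw [hF a α x hα, inducedSingle_eq_twistedSingle,
    map_twistedSingle T φ.φ 𝓑.ν φ.hasDegree_φ DB hDB hα, hDA a α x hα,
    enrichedDSingle_eq_twistedSingle, map_twistedSingle T 𝓐.ν φ.φ 𝓐.hasDegree_ν F hF hα]
  simp only [φ.sum_compTerm_eq T hα, sum_add_distrib]
  rw [add_assoc, sum_diffTerm_add_sum_mergeTerm, add_zero]

end InfinityMorphisms

end CSDG

open CSDG in
/-- Proposition B of the paper.
Let `X` be a pointed, oriented, closed, connected manifold, `Ξ` a set of DG Morse data
on `X` with Barraud–Cornea twisting cocycle `m` (abstracted here as a finite set `σ` of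
critical points with index function `ind`, together with a twisting cocycle `T`
satisfying the Maurer–Cartan equation, over the cubical chain DGA `Ω = C_*(ΩX)`), and
let `φ : (𝓐, ν^𝓐) → (𝓑, ν^𝓑)` be a morphism of `A∞`-modules over `C_*(ΩX)`.

Then the map `φ̃ = Σ_{n≥0} (φ_{n+1} ⊗ 1) ∘ m̃ⁿ : C_*(X, Ξ, 𝓐) → C_*(X, Ξ, 𝓑)` is a
morphism of chain complexes, i.e. `∂ ∘ φ̃ = φ̃ ∘ ∂` for the twisted differentials
`∂ = Σ_{n≥0} (ν_{n+1} ⊗ 1) ∘ m̃ⁿ` on each side.  (The additive maps `DA`, `DB`, `F`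
below are, respectively, the two twisted differentials and the induced map `φ̃`,
characterized by their values on homogeneous generators.) -/
theorem morphism_of_AInfModules_induces_chain_map
    {A M N : Type} [AddCommGroup A] [AddCommGroup M] [AddCommGroup N]
    (Ω : DGA A) (σ : Type) [Fintype σ] [DecidableEq σ] (ind : σ → ℤ)
    (T : Twisting Ω σ ind)
    (𝓐 : AInfModule Ω M) (𝓑 : AInfModule Ω N)
    (φ : AInfMorphism Ω 𝓐 𝓑)
    (DA : (σ → M) →+ (σ → M)) (DB : (σ → N) →+ (σ → N)) (F : (σ → M) →+ (σ → N))
    (hDA : ∀ (a : ℤ) (α : M) (x : σ), α ∈ 𝓐.grade a →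
      DA (Pi.single x α) = enrichedDSingle 𝓐 T a α x)
    (hDB : ∀ (b : ℤ) (β : N) (y : σ), β ∈ 𝓑.grade b →
      DB (Pi.single y β) = enrichedDSingle 𝓑 T b β y)
    (hF : ∀ (a : ℤ) (α : M) (x : σ), α ∈ 𝓐.grade a →
      F (Pi.single x α) = inducedSingle φ T a α x) :
    ∀ c : σ → M, DB (F c) = F (DA c) := by
  have hcomm : DB.comp F = F.comp DA :=
    AddMonoidHom.pi_ext_of_isInternal 𝓐.internal fun _ _ hα x =>
      φ.enrichedD_comp_induced_single T hDA hDB hF hα x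
  exact DFunLike.congr_fun hcomm
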